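/- arXiv:2110.09048 — 4 statements merged into one kernel-verified Lean document; each statement's English description precedes it below -/
import Mathlib

section
/- Let $p > 1$, $N \geq 2$, and $a_1, \dots, a_N$ be positive real numbers with $a_1 \geq a_i$ for all $2 \leq i \leq N$. Then $\frac{\sum_{i=1}^N a_i^p}{(\sum_{i=1}^N a_i)^p} \leq \frac{1 + a_2/a_1}{1 + p \, a_2/a_1} < 1$. -/
open Finset

theorem stmt0 (N : ℕ) (hN : 2 ≤ N) (p : ℝ) (hp : 1 < p)
    (a : Fin N → ℝ) (ha : ∀ i, 0 < a i)
    (hmax : ∀ i : Fin N, a i ≤ a ⟨0, by omega⟩) :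
    (∑ i, a i ^ p) / (∑ i, a i) ^ p ≤
      (1 + a ⟨1, by omega⟩ / a ⟨0, by omega⟩) /
        (1 + p * (a ⟨1, by omega⟩ / a ⟨0, by omega⟩)) ∧
    (1 + a ⟨1, by omega⟩ / a ⟨0, by omega⟩) /
        (1 + p * (a ⟨1, by omega⟩ / a ⟨0, by omega⟩)) < 1 := by
  set i0 : Fin N := ⟨0, by omega⟩ with hi0
  set i1 : Fin N := ⟨1, by omega⟩ with hi1
  have ha0 := ha i0
  have ha1 := ha i1
  set t := a i1 / a i0 with ht
  have ht0 : 0 < t := div_pos ha1 ha0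
  have hpt : 0 < 1 + p * t := by nlinarith
  have hbern : 1 + p * t ≤ (1 + t) ^ p :=
    one_add_mul_self_le_rpow_one_add (by linarith) hp.le
  have hS : 0 < ∑ i, a i := Finset.sum_pos (fun i _ => ha i) ⟨i0, mem_univ _⟩
  have hne : i0 ≠ i1 := by simp [hi0, hi1, Fin.ext_iff]
  have hS2 : a i0 + a i1 ≤ ∑ i, a i := by
    calc a i0 + a i1 = ∑ i ∈ ({i0, i1} : Finset (Fin N)), a i :=
          (Finset.sum_pair hne).symm
      _ ≤ ∑ i, a i := Finset.sum_le_sum_of_subset_of_nonneg (subset_univ _)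
          (fun i _ _ => (ha i).le)
  constructor
  · have hsum : ∑ i, a i ^ p ≤ a i0 ^ (p - 1) * ∑ i, a i := by
      rw [Finset.mul_sum]
      apply Finset.sum_le_sum
      intro i _
      have h1 : a i ^ p = a i ^ (p - 1) * a i := by
        rw [← Real.rpow_add_one (ha i).ne' (p - 1)]
        ring_nf
      rw [h1]
      exact mul_le_mul_of_nonneg_right
        (Real.rpow_le_rpow (ha i).le (hmax i) (by linarith)) (ha i).le
    have hSp : 0 < (∑ i, a i) ^ p := Real.rpow_pos_of_pos hS p
    have step1 : (∑ i, a i ^ p) / (∑ i, a i) ^ p ≤ (a i0 / ∑ i, a i) ^ (p - 1) := by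
      rw [Real.div_rpow ha0.le hS.le]
      have hSp1 : (∑ i, a i) ^ p = (∑ i, a i) ^ (p - 1) * (∑ i, a i) := by
        rw [← Real.rpow_add_one hS.ne' (p - 1)]; ring_nf
      rw [hSp1]
      rw [div_le_div_iff₀ (by rw [← hSp1]; exact hSp) (by positivity)]
      calc (∑ i, a i ^ p) * (∑ i, a i) ^ (p - 1)
          ≤ (a i0 ^ (p - 1) * ∑ i, a i) * (∑ i, a i) ^ (p - 1) :=
            mul_le_mul_of_nonneg_right hsum (by positivity)
        _ = a i0 ^ (p - 1) * ((∑ i, a i) ^ (p - 1) * ∑ i, a i) := by ring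
    have step2 : (a i0 / ∑ i, a i) ^ (p - 1) ≤ (1 / (1 + t)) ^ (p - 1) := by
      apply Real.rpow_le_rpow (by positivity) _ (by linarith)
      rw [div_le_div_iff₀ hS (by linarith)]
      have : a i0 * (1 + t) = a i0 + a i1 := by
        rw [ht, mul_add, mul_one, mul_div_assoc', mul_div_cancel_left₀ _ ha0.ne']
      rw [this]; linarith
    have h1t : (0:ℝ) < 1 + t := by linarith
    have hE : (1 + t) ^ p = (1 + t) ^ (p - 1) * (1 + t) := by
      rw [← Real.rpow_add_one h1t.ne']; ring_nf
    have step3 : (1 / (1 + t)) ^ (p - 1) = (1 + t) / (1 + t) ^ p := by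
      rw [one_div, Real.inv_rpow h1t.le, hE]
      have : (0:ℝ) < (1 + t) ^ (p - 1) := Real.rpow_pos_of_pos h1t _
      field_simp
    have step4 : (1 + t) / (1 + t) ^ p ≤ (1 + t) / (1 + p * t) := by
      gcongr
    calc (∑ i, a i ^ p) / (∑ i, a i) ^ p
        ≤ (a i0 / ∑ i, a i) ^ (p - 1) := step1
      _ ≤ (1 / (1 + t)) ^ (p - 1) := step2
      _ = (1 + t) / (1 + t) ^ p := step3
      _ ≤ (1 + t) / (1 + p * t) := step4
  · rw [div_lt_one hpt]
    nlinarith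
end

section
/- Let $n \geq 2$, $\sigma \in (0,1)$, and define $\widetilde{W}(Y) = \gamma_{n,\sigma}\int_{\mathbb{R}^n} \frac{t^{2\sigma}}{(|y-x|^2+t^2)^{(n+2\sigma)/2}} (1+|x|^2)^{-(n-2\sigma)/2}\,dx$ for $Y = (y,t) \in \mathbb{R}^{n+1}_+$, where $\gamma_{n,\sigma} \int_{\mathbb{R}^n}(1+|z|^2)^{-(n+2\sigma)/2}dz = 1$. Then $\widetilde{W}$ satisfies the conformal invariance $\widetilde{W}(Y) = |Y|^{2\sigma - n}\, \widetilde{W}(Y/|Y|^2)$ for all $Y \in \mathbb{R}^{n+1}_+$, $Y \neq 0$. -/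
open MeasureTheory

open Real EuclideanGeometry Set in
private lemma scalar_id (n : ℕ) (σ t A s r : ℝ) (ht : 0 < t) (hA : 0 < A)
    (hs : 0 < s) (hr : 0 < r) :
    (s ⁻¹) ^ n * ((t / r) ^ (2 * σ) / (A / (r * s)) ^ (((n:ℝ) + 2 * σ) / 2)
      * ((1 + s) / s) ^ (-((n:ℝ) - 2 * σ) / 2))
    = r ^ (((n:ℝ) - 2 * σ) / 2)
      * (t ^ (2 * σ) / A ^ (((n:ℝ) + 2 * σ) / 2) * (1 + s) ^ (-((n:ℝ) - 2 * σ) / 2)) := by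
  have h1 : (0:ℝ) < 1 + s := by linarith
  have hL : 0 < (s ⁻¹) ^ n * ((t / r) ^ (2 * σ) / (A / (r * s)) ^ (((n:ℝ) + 2 * σ) / 2)
      * ((1 + s) / s) ^ (-((n:ℝ) - 2 * σ) / 2)) := by positivity
  have hR : 0 < r ^ (((n:ℝ) - 2 * σ) / 2)
      * (t ^ (2 * σ) / A ^ (((n:ℝ) + 2 * σ) / 2) * (1 + s) ^ (-((n:ℝ) - 2 * σ) / 2)) := by
    positivity
  rw [← Real.exp_log hL, ← Real.exp_log hR]
  congr 1
  rw [Real.log_mul (by positivity) (by positivity),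
    Real.log_mul (by positivity) (by positivity),
    Real.log_div (by positivity) (by positivity),
    Real.log_mul (by positivity) (by positivity),
    Real.log_mul (by positivity) (by positivity),
    Real.log_div (by positivity) (by positivity),
    Real.log_pow, Real.log_inv,
    Real.log_rpow (by positivity), Real.log_rpow (by positivity),
    Real.log_rpow (by positivity), Real.log_rpow (by positivity),
    Real.log_rpow (by positivity), Real.log_rpow (by positivity),
    Real.log_div ht.ne' hr.ne', Real.log_div hA.ne' (by positivity),
    Real.log_div (by positivity) hs.ne', Real.log_mul hr.ne' hs.ne']
  rw [Real.log_rpow h1]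
  ring

private lemma key_norm (n : ℕ) (y x : EuclideanSpace ℝ (Fin n)) (t : ℝ) (ht : 0 < t)
    (hx : x ≠ 0) :
    ‖(1 / (‖y‖ ^ 2 + t ^ 2)) • y - (1 / ‖x‖ ^ 2) • x‖ ^ 2 + (t / (‖y‖ ^ 2 + t ^ 2)) ^ 2
    = (‖y - x‖ ^ 2 + t ^ 2) / ((‖y‖ ^ 2 + t ^ 2) * ‖x‖ ^ 2) := by
  have hx' : (0:ℝ) < ‖x‖ := norm_pos_iff.2 hx
  have hs : (0:ℝ) < ‖x‖ ^ 2 := by positivity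
  have hr : (0:ℝ) < ‖y‖ ^ 2 + t ^ 2 := by positivity
  have e1 := norm_sub_sq_real ((1 / (‖y‖ ^ 2 + t ^ 2)) • y) ((1 / ‖x‖ ^ 2) • x)
  have e2 := norm_sub_sq_real y x
  rw [e1, e2]
  rw [real_inner_smul_left, real_inner_smul_right, norm_smul, norm_smul, mul_pow, mul_pow,
    Real.norm_eq_abs, Real.norm_eq_abs, sq_abs, sq_abs]
  set b : ℝ := inner ℝ y x
  field_simp
  ring

private lemma inv_map {n : ℕ} (x : EuclideanSpace ℝ (Fin n)) (hx : x ≠ 0) :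
    (1 / ‖(1 / ‖x‖ ^ 2) • x‖ ^ 2) • (1 / ‖x‖ ^ 2) • x = x := by
  have hx' : (0:ℝ) < ‖x‖ := norm_pos_iff.2 hx
  rw [norm_smul, smul_smul, Real.norm_eq_abs, mul_pow, sq_abs]
  rw [show (1 / ((1 / ‖x‖ ^ 2) ^ 2 * ‖x‖ ^ 2) * (1 / ‖x‖ ^ 2) : ℝ) = 1 by field_simp]
  exact one_smul _ x

open EuclideanGeometry Set in
private lemma inv_cov {n : ℕ} (G : EuclideanSpace ℝ (Fin n) → ℝ) :
    ∫ x in {(0 : EuclideanSpace ℝ (Fin n))}ᶜ, G x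
      = ∫ x in {(0 : EuclideanSpace ℝ (Fin n))}ᶜ,
          ((‖x‖ ^ 2)⁻¹ ^ n) * G ((1 / ‖x‖ ^ 2) • x) := by
  set f : EuclideanSpace ℝ (Fin n) → EuclideanSpace ℝ (Fin n) :=
    fun x => (1 / ‖x‖ ^ 2) • x with hf
  set f' : EuclideanSpace ℝ (Fin n) → EuclideanSpace ℝ (Fin n) →L[ℝ] EuclideanSpace ℝ (Fin n) :=
    fun x => ((1:ℝ) / dist x 0) ^ 2 •
      ((ℝ ∙ (x - 0))ᗮ.reflection : EuclideanSpace ℝ (Fin n) →L[ℝ] EuclideanSpace ℝ (Fin n))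
    with hf'
  have hs : MeasurableSet {(0 : EuclideanSpace ℝ (Fin n))}ᶜ := (measurableSet_singleton 0).compl
  have hinvf : ∀ z : EuclideanSpace ℝ (Fin n), z ≠ 0 →
      inversion (0 : EuclideanSpace ℝ (Fin n)) 1 z = f z := by
    intro z hz
    simp only [inversion_def, vsub_eq_sub, vadd_eq_add, sub_zero, add_zero, dist_zero_right, hf,
      div_pow, one_pow]
  have hfd : ∀ x ∈ ({(0 : EuclideanSpace ℝ (Fin n))}ᶜ : Set (EuclideanSpace ℝ (Fin n))),
      HasFDerivWithinAt f (f' x)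
        ({(0 : EuclideanSpace ℝ (Fin n))}ᶜ : Set (EuclideanSpace ℝ (Fin n))) x := by
    intro x hx
    have h1 := (hasFDerivAt_inversion (c := (0 : EuclideanSpace ℝ (Fin n))) (R := 1)
      hx).hasFDerivWithinAt
      (s := ({(0 : EuclideanSpace ℝ (Fin n))}ᶜ : Set (EuclideanSpace ℝ (Fin n))))
    exact h1.congr (fun z hz => (hinvf z hz).symm) (hinvf x hx).symm
  have hff : ∀ z : EuclideanSpace ℝ (Fin n), z ≠ 0 → f (f z) = z := fun z hz => inv_map z hz
  have hfne : ∀ z : EuclideanSpace ℝ (Fin n), z ≠ 0 → f z ≠ 0 := by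
    intro z hz
    have hz' : (0:ℝ) < ‖z‖ := norm_pos_iff.2 hz
    exact smul_ne_zero (by positivity) hz
  have hinj : InjOn f ({(0 : EuclideanSpace ℝ (Fin n))}ᶜ : Set (EuclideanSpace ℝ (Fin n))) := by
    intro a ha b hb h
    have := congrArg f h
    rwa [hff a ha, hff b hb] at this
  have himg : f '' ({(0 : EuclideanSpace ℝ (Fin n))}ᶜ : Set (EuclideanSpace ℝ (Fin n)))
      = ({(0 : EuclideanSpace ℝ (Fin n))}ᶜ : Set (EuclideanSpace ℝ (Fin n))) := by
    apply Subset.antisymm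
    · rintro _ ⟨z, hz, rfl⟩; exact hfne z hz
    · intro z hz; exact ⟨f z, hfne z hz, hff z hz⟩
  have hdet : ∀ x : EuclideanSpace ℝ (Fin n), x ≠ 0 → |(f' x).det| = (‖x‖ ^ 2)⁻¹ ^ n := by
    intro x hx
    have hx' : (0:ℝ) < ‖x‖ := norm_pos_iff.2 hx
    have hd : ((f' x) : EuclideanSpace ℝ (Fin n) →ₗ[ℝ] EuclideanSpace ℝ (Fin n)) =
        ((1:ℝ) / dist x 0) ^ 2 •
          ((((ℝ ∙ (x - 0))ᗮ.reflection :
            EuclideanSpace ℝ (Fin n) →L[ℝ] EuclideanSpace ℝ (Fin n))) :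
              EuclideanSpace ℝ (Fin n) →ₗ[ℝ] EuclideanSpace ℝ (Fin n)) := rfl
    set R : EuclideanSpace ℝ (Fin n) →ₗ[ℝ] EuclideanSpace ℝ (Fin n) :=
      ((((ℝ ∙ (x - 0))ᗮ.reflection : EuclideanSpace ℝ (Fin n) →L[ℝ] EuclideanSpace ℝ (Fin n))) :
        EuclideanSpace ℝ (Fin n) →ₗ[ℝ] EuclideanSpace ℝ (Fin n)) with hR
    have hRR : R ∘ₗ R = LinearMap.id := by
      apply LinearMap.ext
      intro v
      simp [hR, Submodule.reflection_reflection]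
    have hdd : LinearMap.det R * LinearMap.det R = 1 := by
      rw [← LinearMap.det_comp, hRR, LinearMap.det_id]
    have habs : |LinearMap.det R| = 1 := by
      rcases mul_self_eq_one_iff.1 hdd with h | h <;> rw [h] <;> norm_num
    show |LinearMap.det ((f' x) : EuclideanSpace ℝ (Fin n) →ₗ[ℝ] EuclideanSpace ℝ (Fin n))|
      = (‖x‖ ^ 2)⁻¹ ^ n
    rw [hd, LinearMap.det_smul, finrank_euclideanSpace_fin, abs_mul, abs_pow, habs, mul_one]
    rw [dist_zero_right]
    rw [show |((1:ℝ) / ‖x‖) ^ 2| = ((1:ℝ) / ‖x‖) ^ 2 from abs_of_pos (by positivity)]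
    simp [one_div, inv_pow]
  calc ∫ x in {(0 : EuclideanSpace ℝ (Fin n))}ᶜ, G x
      = ∫ x in f '' ({(0 : EuclideanSpace ℝ (Fin n))}ᶜ : Set (EuclideanSpace ℝ (Fin n))), G x := by
        rw [himg]
    _ = ∫ x in {(0 : EuclideanSpace ℝ (Fin n))}ᶜ, |(f' x).det| • G (f x) :=
        integral_image_eq_integral_abs_det_fderiv_smul volume hs hfd hinj G
    _ = ∫ x in {(0 : EuclideanSpace ℝ (Fin n))}ᶜ, ((‖x‖ ^ 2)⁻¹ ^ n) * G ((1 / ‖x‖ ^ 2) • x) := by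
        apply setIntegral_congr_fun hs
        intro x hx
        simp only [smul_eq_mul]
        rw [hdet x hx]

private lemma pointwise_id (n : ℕ) (σ t : ℝ) (y x : EuclideanSpace ℝ (Fin n)) (ht : 0 < t)
    (hx : x ≠ 0) :
    (‖x‖ ^ 2)⁻¹ ^ n * ((t / (‖y‖ ^ 2 + t ^ 2)) ^ (2 * σ)
        / (‖(1 / (‖y‖ ^ 2 + t ^ 2)) • y - (1 / ‖x‖ ^ 2) • x‖ ^ 2
            + (t / (‖y‖ ^ 2 + t ^ 2)) ^ 2) ^ (((n:ℝ) + 2 * σ) / 2)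
      * (1 + ‖(1 / ‖x‖ ^ 2) • x‖ ^ 2) ^ (-((n:ℝ) - 2 * σ) / 2))
    = (‖y‖ ^ 2 + t ^ 2) ^ (((n:ℝ) - 2 * σ) / 2)
      * (t ^ (2 * σ) / (‖y - x‖ ^ 2 + t ^ 2) ^ (((n:ℝ) + 2 * σ) / 2)
          * (1 + ‖x‖ ^ 2) ^ (-((n:ℝ) - 2 * σ) / 2)) := by
  have hx' : (0:ℝ) < ‖x‖ := norm_pos_iff.2 hx
  have hb : (1:ℝ) + ‖(1 / ‖x‖ ^ 2) • x‖ ^ 2 = (1 + ‖x‖ ^ 2) / ‖x‖ ^ 2 := by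
    rw [norm_smul, Real.norm_eq_abs, mul_pow, sq_abs]
    field_simp
    ring
  rw [key_norm n y x t ht hx, hb]
  exact scalar_id n σ t (‖y - x‖ ^ 2 + t ^ 2) (‖x‖ ^ 2) (‖y‖ ^ 2 + t ^ 2) ht (by positivity)
    (by positivity) (by positivity)

theorem stmt5 (n : ℕ) (hn : 2 ≤ n) (σ γ : ℝ) (hσ : σ ∈ Set.Ioo (0:ℝ) 1)
    (hγ : γ * ∫ z : EuclideanSpace ℝ (Fin n),
      (1 + ‖z‖ ^ 2) ^ (-((n:ℝ) + 2 * σ) / 2) = 1)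
    (W : EuclideanSpace ℝ (Fin n) → ℝ → ℝ)
    (hW : ∀ y t, W y t = γ * ∫ x : EuclideanSpace ℝ (Fin n),
      t ^ (2 * σ) / (‖y - x‖ ^ 2 + t ^ 2) ^ (((n:ℝ) + 2 * σ) / 2)
        * (1 + ‖x‖ ^ 2) ^ (-((n:ℝ) - 2 * σ) / 2))
    (y : EuclideanSpace ℝ (Fin n)) (t : ℝ) (ht : 0 < t) :
    W y t = (‖y‖ ^ 2 + t ^ 2) ^ ((2 * σ - (n:ℝ)) / 2)
      * W ((1 / (‖y‖ ^ 2 + t ^ 2)) • y) (t / (‖y‖ ^ 2 + t ^ 2)) := by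
  haveI : Nontrivial (EuclideanSpace ℝ (Fin n)) :=
    Module.nontrivial_of_finrank_pos (R := ℝ)
      (by rw [finrank_euclideanSpace_fin]; omega)
  have hr : (0:ℝ) < ‖y‖ ^ 2 + t ^ 2 := by positivity
  rw [hW y t, hW ((1 / (‖y‖ ^ 2 + t ^ 2)) • y) (t / (‖y‖ ^ 2 + t ^ 2))]
  have main : (∫ x : EuclideanSpace ℝ (Fin n),
        (t / (‖y‖ ^ 2 + t ^ 2)) ^ (2 * σ)
          / (‖(1 / (‖y‖ ^ 2 + t ^ 2)) • y - x‖ ^ 2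
              + (t / (‖y‖ ^ 2 + t ^ 2)) ^ 2) ^ (((n:ℝ) + 2 * σ) / 2)
          * (1 + ‖x‖ ^ 2) ^ (-((n:ℝ) - 2 * σ) / 2))
      = (‖y‖ ^ 2 + t ^ 2) ^ (((n:ℝ) - 2 * σ) / 2) * ∫ x : EuclideanSpace ℝ (Fin n),
          t ^ (2 * σ) / (‖y - x‖ ^ 2 + t ^ 2) ^ (((n:ℝ) + 2 * σ) / 2)
            * (1 + ‖x‖ ^ 2) ^ (-((n:ℝ) - 2 * σ) / 2) := by
    have hs : MeasurableSet {(0 : EuclideanSpace ℝ (Fin n))}ᶜ :=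
      (measurableSet_singleton 0).compl
    rw [← restrict_compl_singleton (μ := (volume : Measure (EuclideanSpace ℝ (Fin n)))) 0]
    rw [inv_cov]
    rw [setIntegral_congr_fun hs (g := fun x => (‖y‖ ^ 2 + t ^ 2) ^ (((n:ℝ) - 2 * σ) / 2)
      * (t ^ (2 * σ) / (‖y - x‖ ^ 2 + t ^ 2) ^ (((n:ℝ) + 2 * σ) / 2)
          * (1 + ‖x‖ ^ 2) ^ (-((n:ℝ) - 2 * σ) / 2)))
      (fun x hx => pointwise_id n σ t y x ht hx)]
    rw [integral_const_mul, restrict_compl_singleton]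
  rw [main]
  have h2 : (‖y‖ ^ 2 + t ^ 2) ^ ((2 * σ - (n:ℝ)) / 2)
      * (‖y‖ ^ 2 + t ^ 2) ^ (((n:ℝ) - 2 * σ) / 2) = 1 := by
    have he : (2 * σ - (n:ℝ)) / 2 + ((n:ℝ) - 2 * σ) / 2 = 0 := by ring
    rw [← Real.rpow_add hr, he, Real.rpow_zero]
  set I : ℝ := ∫ x : EuclideanSpace ℝ (Fin n),
    t ^ (2 * σ) / (‖y - x‖ ^ 2 + t ^ 2) ^ (((n:ℝ) + 2 * σ) / 2)
      * (1 + ‖x‖ ^ 2) ^ (-((n:ℝ) - 2 * σ) / 2)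
  linear_combination (-(γ * I)) * h2
end

section
/- Let $n \geq 2$, $\sigma \in (0,1)$, $\lambda > 0$. For $Y = (y,t) \in \mathbb{R}^{n+1}_+$ with $\lambda < |Y| \leq 10\lambda$ and $\eta \in \mathbb{R}^n$ with $|\eta| > \lambda$, there exists a constant $C > 0$ depending only on $n$ and $\sigma$ such that $G_\lambda(Y,\eta) \leq C\, \frac{(|Y| - \lambda)(|\eta|^2 - \lambda^2)}{\lambda\, |Y - \eta|^{n - 2\sigma + 2}}$, where $G_\lambda(Y,\eta) = N_{n,\sigma}\big(|Y-\eta|^{2\sigma-n} - (\lambda/|\eta|)^{n-2\sigma}|Y-\eta^\lambda|^{2\sigma-n}\big)$ and $\eta^\lambda = \lambda^2\eta/|\eta|^2$. -/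
/-- MVT-type estimate: for `0 < s`, `0 ≤ A`, `0 < α`,
`s ^ (-α) - (s + A) ^ (-α) ≤ α * A * s ^ (-α - 1)`. -/
lemma key_mvt {s A α : ℝ} (hs : 0 < s) (hA : 0 ≤ A) (hα : 0 < α) :
    s ^ (-α) - (s + A) ^ (-α) ≤ α * A * s ^ (-α - 1) := by
  rcases eq_or_lt_of_le hA with rfl | hA
  · simp
  have hlt : s < s + A := by linarith
  have hcont : ContinuousOn (fun x : ℝ => x ^ (-α)) (Set.Icc s (s + A)) := by
    intro x hx
    have hx0 : x ≠ 0 := ne_of_gt (lt_of_lt_of_le hs hx.1)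
    exact (Real.continuousAt_rpow_const x (-α) (Or.inl hx0)).continuousWithinAt
  have hderiv : ∀ x ∈ Set.Ioo s (s + A),
      HasDerivAt (fun x : ℝ => x ^ (-α)) ((-α) * x ^ (-α - 1)) x := by
    intro x hx
    exact Real.hasDerivAt_rpow_const (Or.inl (ne_of_gt (hs.trans hx.1)))
  obtain ⟨c, hc, hceq⟩ := exists_hasDerivAt_eq_slope (fun x : ℝ => x ^ (-α))
    (fun x => (-α) * x ^ (-α - 1)) hlt hcont hderiv
  have hA0 : A ≠ 0 := hA.ne'
  have h1 : (s + A) ^ (-α) - s ^ (-α) = (-α) * c ^ (-α - 1) * A := by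
    field_simp at hceq
    rw [add_sub_cancel_left, eq_div_iff hA0] at hceq
    rw [← hceq]; ring
  have h2 : c ^ (-α - 1) ≤ s ^ (-α - 1) :=
    Real.rpow_le_rpow_of_nonpos hs hc.1.le (by linarith)
  have h3 : α * A * c ^ (-α - 1) ≤ α * A * s ^ (-α - 1) :=
    mul_le_mul_of_nonneg_left h2 (by positivity)
  nlinarith [h1, h3]

set_option maxHeartbeats 1000000 in
theorem stmt7 (n : ℕ) (hn : 2 ≤ n) (σ Nc : ℝ) (hσ : σ ∈ Set.Ioo (0:ℝ) 1)
    (hNc : 0 < Nc) :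
    ∃ C > 0, ∀ lam : ℝ, 0 < lam →
      ∀ (y : EuclideanSpace ℝ (Fin n)) (t : ℝ), 0 < t →
      ∀ η : EuclideanSpace ℝ (Fin n),
        lam < Real.sqrt (‖y‖ ^ 2 + t ^ 2) →
        Real.sqrt (‖y‖ ^ 2 + t ^ 2) ≤ 10 * lam →
        lam < ‖η‖ →
        Nc * ((‖y - η‖ ^ 2 + t ^ 2) ^ ((2 * σ - (n:ℝ)) / 2)
            - (lam / ‖η‖) ^ ((n:ℝ) - 2 * σ)
              * (‖y - (lam ^ 2 / ‖η‖ ^ 2) • η‖ ^ 2 + t ^ 2) ^ ((2 * σ - (n:ℝ)) / 2))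
          ≤ C * ((Real.sqrt (‖y‖ ^ 2 + t ^ 2) - lam) * (‖η‖ ^ 2 - lam ^ 2)
              / (lam * Real.sqrt (‖y - η‖ ^ 2 + t ^ 2) ^ ((n:ℝ) - 2 * σ + 2))) := by
  obtain ⟨hσ0, hσ1⟩ := hσ
  set α : ℝ := ((n : ℝ) - 2 * σ) / 2 with hαdef
  have hn2 : (2 : ℝ) ≤ (n : ℝ) := by exact_mod_cast hn
  have hα : 0 < α := by unfold α; linarith
  refine ⟨11 * Nc * α, by positivity, ?_⟩
  intro lam hlam y t ht η hr1 hr2 he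
  set e : ℝ := ‖η‖ with hedef
  have he0 : 0 < e := lt_trans hlam he
  set r : ℝ := Real.sqrt (‖y‖ ^ 2 + t ^ 2) with hrdef
  set s : ℝ := ‖y - η‖ ^ 2 + t ^ 2 with hsdef
  set s2 : ℝ := ‖y - (lam ^ 2 / ‖η‖ ^ 2) • η‖ ^ 2 + t ^ 2 with hs2def
  have hs : 0 < s := by positivity
  have hs2 : 0 < s2 := by positivity
  set A : ℝ := ((‖y‖ ^ 2 + t ^ 2) - lam ^ 2) * (e ^ 2 - lam ^ 2) / lam ^ 2 with hAdef
  have hR2 : r ^ 2 = ‖y‖ ^ 2 + t ^ 2 := Real.sq_sqrt (by positivity)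
  have hrlam : lam < r := hr1
  have hR2lam : lam ^ 2 < ‖y‖ ^ 2 + t ^ 2 := by
    rw [← hR2]; nlinarith
  have he2 : lam ^ 2 < e ^ 2 := by nlinarith
  have hA : 0 < A := by
    apply div_pos (mul_pos (by linarith) (by linarith)) (by positivity)
  -- the Kelvin identity
  have hident : (e / lam) ^ 2 * s2 = s + A := by
    have hy1 : ‖y - η‖ ^ 2 = ‖y‖ ^ 2 - 2 * inner ℝ y η + ‖η‖ ^ 2 :=
      norm_sub_sq_real y η
    have hy2 : ‖y - (lam ^ 2 / ‖η‖ ^ 2) • η‖ ^ 2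
        = ‖y‖ ^ 2 - 2 * ((lam ^ 2 / ‖η‖ ^ 2) * inner ℝ y η)
          + (lam ^ 2 / ‖η‖ ^ 2) ^ 2 * ‖η‖ ^ 2 := by
      rw [norm_sub_sq_real, real_inner_smul_right, norm_smul]
      have : ‖(lam ^ 2 / ‖η‖ ^ 2 : ℝ)‖ = lam ^ 2 / ‖η‖ ^ 2 := by
        rw [Real.norm_eq_abs, abs_of_pos (by positivity)]
      rw [this]; ring
    rw [hsdef, hs2def, hAdef, hy1, hy2, ← hedef]
    field_simp
    ring
  -- rewrite the mirrored term
  have hstepA : (lam / e) ^ ((n : ℝ) - 2 * σ) * s2 ^ ((2 * σ - (n : ℝ)) / 2)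
      = (s + A) ^ (-α) := by
    rw [← hident]
    have hel : (0 : ℝ) < e / lam := by positivity
    rw [Real.mul_rpow (by positivity) hs2.le]
    have h1 : ((e / lam) ^ 2 : ℝ) ^ (-α) = (e / lam) ^ (2 * (-α)) := by
      rw [Real.rpow_mul hel.le, Real.rpow_two]
    have h2 : (2 : ℝ) * (-α) = -((n : ℝ) - 2 * σ) := by unfold α; ring
    have h3 : (lam / e) ^ ((n : ℝ) - 2 * σ) = (e / lam) ^ (-((n : ℝ) - 2 * σ)) := by
      rw [Real.rpow_neg hel.le, ← Real.inv_rpow hel.le, inv_div]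
    have h4 : ((2 * σ - (n : ℝ)) / 2) = -α := by unfold α; ring
    rw [h1, h2, h3, h4]
  have h4 : ((2 * σ - (n : ℝ)) / 2) = -α := by unfold α; ring
  -- key MVT bound
  have hkey : s ^ (-α) - (s + A) ^ (-α) ≤ α * A * s ^ (-α - 1) :=
    key_mvt hs hA.le hα
  -- denominator rewrite
  have hden : Real.sqrt s ^ ((n : ℝ) - 2 * σ + 2) = s ^ (α + 1) := by
    rw [Real.sqrt_eq_rpow, ← Real.rpow_mul hs.le]
    congr 1
    unfold α; ring
  have hsp : 0 < s ^ (α + 1) := Real.rpow_pos_of_pos hs _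
  have hinv : s ^ (-α - 1) = (s ^ (α + 1))⁻¹ := by
    rw [← Real.rpow_neg hs.le]; congr 1; ring
  rw [hstepA, h4, hden]
  calc Nc * (s ^ (-α) - (s + A) ^ (-α))
      ≤ Nc * (α * A * s ^ (-α - 1)) := by
        apply mul_le_mul_of_nonneg_left hkey hNc.le
    _ = (Nc * α * A) / s ^ (α + 1) := by rw [hinv]; ring
    _ ≤ (11 * Nc * α * ((r - lam) * (e ^ 2 - lam ^ 2) / lam)) / s ^ (α + 1) := by
        have hfact : (r ^ 2 - lam ^ 2) * (e ^ 2 - lam ^ 2)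
            ≤ 11 * lam * ((r - lam) * (e ^ 2 - lam ^ 2)) := by
          nlinarith [mul_nonneg (mul_nonneg (sub_pos.mpr hrlam).le (sub_pos.mpr he2).le)
            (by linarith : (0:ℝ) ≤ 11 * lam - (r + lam))]
        have hAle : A ≤ 11 * ((r - lam) * (e ^ 2 - lam ^ 2) / lam) := by
          have heq : 11 * ((r - lam) * (e ^ 2 - lam ^ 2) / lam)
              = 11 * lam * ((r - lam) * (e ^ 2 - lam ^ 2)) / lam ^ 2 := by
            field_simp
          rw [hAdef, ← hR2, heq]
          gcongr
        rw [div_le_div_iff_of_pos_right hsp]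
        nlinarith [mul_le_mul_of_nonneg_left hAle (by positivity : (0:ℝ) ≤ Nc * α)]
    _ = 11 * Nc * α * ((r - lam) * (e ^ 2 - lam ^ 2) / (lam * s ^ (α + 1))) := by
        rw [mul_div_assoc, div_div]
end

section
/- Let $n > 2\sigma$ with $\sigma \in (0,1)$, $p = \frac{n+2\sigma}{n-2\sigma}$, and for $z_2 \in (0,1)$, $z_3 > 0$ let $f(z_1,z_2,z_3) = z_2(z_1+z_3)^p - z_1^p$, $Z(z_2,z_3) = \frac{z_3 z_2^{1/(p-1)}}{1 - z_2^{1/(p-1)}}$, $M(z_2,z_3) = \frac{z_2 z_3^p}{(1-z_2^{1/(p-1)})^{4\sigma/(n-2\sigma)}}$. Define $F(z_1,z_2,z_3) = f(z_1,z_2,z_3)$ if $z_2 \geq 1$, or if $z_2 < 1$ and $0 \leq z_1 \leq Z(z_2,z_3)$; and $F(z_1,z_2,z_3) = M(z_2,z_3)$ if $z_2 < 1$ and $z_1 > Z(z_2,z_3)$. Then $F$ is nonnegative, and is non-decreasing in each of the variables $z_1$, $z_2$, and $z_3$ separately. -/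
open Real Set

lemma hasDerivAt_g (p : ℝ) (hp1 : 1 ≤ p) (z₂ z₃ x : ℝ) :
    HasDerivAt (fun x => z₂ * (x + z₃) ^ p - x ^ p)
      (z₂ * (p * (x + z₃) ^ (p - 1)) - p * x ^ (p - 1)) x := by
  have h1 : HasDerivAt (fun x : ℝ => (x + z₃) ^ p) (p * (x + z₃) ^ (p - 1) * 1) x :=
    by
      have h := (Real.hasDerivAt_rpow_const (x := x + z₃) (Or.inr hp1)).comp x
        ((hasDerivAt_id x).add_const z₃)
      simpa [Function.comp_def] using h
  rw [mul_one] at h1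
  exact (h1.const_mul z₂).sub (Real.hasDerivAt_rpow_const (Or.inr hp1))

lemma aux_mono {p : ℝ} (hp1 : 1 < p) (z₂ z₃ : ℝ) {a b : ℝ} (hab : a ≤ b)
    (H : ∀ x ∈ Set.Icc a b, x ^ (p - 1) ≤ z₂ * (x + z₃) ^ (p - 1)) :
    z₂ * (a + z₃) ^ p - a ^ p ≤ z₂ * (b + z₃) ^ p - b ^ p := by
  have hm : MonotoneOn (fun x => z₂ * (x + z₃) ^ p - x ^ p) (Set.Icc a b) := by
    apply monotoneOn_of_deriv_nonneg (convex_Icc a b)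
    · exact fun x _ => ((hasDerivAt_g p hp1.le z₂ z₃ x).differentiableAt).continuousAt.continuousWithinAt
    · exact fun x _ => ((hasDerivAt_g p hp1.le z₂ z₃ x).differentiableAt).differentiableWithinAt
    · intro x hx
      rw [interior_Icc] at hx
      rw [(hasDerivAt_g p hp1.le z₂ z₃ x).deriv]
      have hH := H x (Set.mem_Icc.2 ⟨hx.1.le, hx.2.le⟩)
      nlinarith [hp1]
  exact hm (Set.left_mem_Icc.2 hab) (Set.right_mem_Icc.2 hab) hab

lemma cond_ge1 {p : ℝ} (hp1 : 1 < p) {z₂ z₃ x : ℝ} (hz₂ : 1 ≤ z₂) (hz₃ : 0 ≤ z₃) (hx : 0 ≤ x) :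
    x ^ (p - 1) ≤ z₂ * (x + z₃) ^ (p - 1) :=
  calc x ^ (p - 1) ≤ (x + z₃) ^ (p - 1) :=
        Real.rpow_le_rpow hx (by linarith) (by linarith)
  _ ≤ z₂ * (x + z₃) ^ (p - 1) :=
        le_mul_of_one_le_left (Real.rpow_nonneg (by linarith) _) hz₂

lemma s_lt_one {p z₂ : ℝ} (hp1 : 1 < p) (hz₂ : z₂ ∈ Set.Ioo (0:ℝ) 1) :
    z₂ ^ (1 / (p - 1)) < 1 :=
  Real.rpow_lt_one hz₂.1.le hz₂.2 (div_pos one_pos (by linarith))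

lemma s_rpow_eq {p z₂ : ℝ} (hp1 : 1 < p) (hz₂ : 0 < z₂) :
    (z₂ ^ (1 / (p - 1))) ^ (p - 1) = z₂ := by
  rw [← Real.rpow_mul hz₂.le, one_div_mul_cancel (by intro h; apply absurd hp1; rw [sub_eq_zero] at h; rw [← h]; exact lt_irrefl _ : p - 1 ≠ 0), Real.rpow_one]

lemma x_le_s {p z₂ z₃ x : ℝ} (hp1 : 1 < p) (hz₂ : z₂ ∈ Set.Ioo (0:ℝ) 1) (hz₃ : 0 < z₃)
    (hx : x ≤ z₃ * z₂ ^ (1 / (p - 1)) / (1 - z₂ ^ (1 / (p - 1)))) :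
    x ≤ z₂ ^ (1 / (p - 1)) * (x + z₃) := by
  set s := z₂ ^ (1 / (p - 1)) with hs
  have h1s : 0 < 1 - s := by have := s_lt_one hp1 hz₂; linarith
  have h2 : x * (1 - s) ≤ z₃ * s := by
    have := (le_div_iff₀ h1s).mp hx
    linarith
  nlinarith

lemma cond_lt {p z₂ z₃ x : ℝ} (hp1 : 1 < p) (hz₂ : z₂ ∈ Set.Ioo (0:ℝ) 1) (hz₃ : 0 < z₃)
    (hx0 : 0 ≤ x) (hx : x ≤ z₃ * z₂ ^ (1 / (p - 1)) / (1 - z₂ ^ (1 / (p - 1)))) :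
    x ^ (p - 1) ≤ z₂ * (x + z₃) ^ (p - 1) := by
  set s := z₂ ^ (1 / (p - 1)) with hs
  have hs0 : 0 < s := Real.rpow_pos_of_pos hz₂.1 _
  have hxs := x_le_s hp1 hz₂ hz₃ hx
  calc x ^ (p - 1) ≤ (s * (x + z₃)) ^ (p - 1) :=
        Real.rpow_le_rpow hx0 hxs (by linarith)
  _ = s ^ (p - 1) * (x + z₃) ^ (p - 1) := Real.mul_rpow hs0.le (by linarith)
  _ = z₂ * (x + z₃) ^ (p - 1) := by rw [hs, s_rpow_eq hp1 hz₂.1]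

lemma key_id {p z₂ z₃ : ℝ} (hp1 : 1 < p) (hz₂ : z₂ ∈ Set.Ioo (0:ℝ) 1) (hz₃ : 0 < z₃) :
    z₂ * (z₃ * z₂ ^ (1 / (p - 1)) / (1 - z₂ ^ (1 / (p - 1))) + z₃) ^ p
      - (z₃ * z₂ ^ (1 / (p - 1)) / (1 - z₂ ^ (1 / (p - 1)))) ^ p
    = z₂ * z₃ ^ p / (1 - z₂ ^ (1 / (p - 1))) ^ (p - 1) := by
  set s := z₂ ^ (1 / (p - 1)) with hs
  have hs0 : 0 < s := Real.rpow_pos_of_pos hz₂.1 _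
  have h1s : 0 < 1 - s := by have := s_lt_one hp1 hz₂; linarith
  have h1 : z₃ * s / (1 - s) + z₃ = z₃ / (1 - s) := by field_simp; ring
  rw [h1]
  have h2 : (z₃ / (1 - s)) ^ p = z₃ ^ p / (1 - s) ^ p := Real.div_rpow hz₃.le h1s.le p
  have h3 : (z₃ * s / (1 - s)) ^ p = z₃ ^ p * s ^ p / (1 - s) ^ p := by
    rw [Real.div_rpow (by positivity) h1s.le, Real.mul_rpow hz₃.le hs0.le]
  have h4 : s ^ p = z₂ * s := by
    have hne : p - 1 ≠ 0 := by intro h; rw [sub_eq_zero] at h; rw [← h] at hp1; exact lt_irrefl _ hp1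
    rw [hs, ← Real.rpow_mul hz₂.1.le]
    have he : 1 / (p - 1) * p = 1 + 1 / (p - 1) := by field_simp; ring
    rw [he, Real.rpow_add hz₂.1, Real.rpow_one]
  have h5 : (1 - s) ^ p = (1 - s) ^ (p - 1) * (1 - s) := by
    rw [← Real.rpow_add_one h1s.ne', sub_add_cancel]
  have hd : (0:ℝ) < (1 - s) ^ (p - 1) := Real.rpow_pos_of_pos h1s _
  rw [h2, h3, h4, h5]
  field_simp

lemma s_pow_p {p z₂ : ℝ} (hp1 : 1 < p) (hz₂ : 0 < z₂) :
    (z₂ ^ (1 / (p - 1))) ^ p = z₂ * z₂ ^ (1 / (p - 1)) := by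
  have hne : p - 1 ≠ 0 := by intro h; rw [sub_eq_zero] at h; rw [← h] at hp1; exact lt_irrefl _ hp1
  rw [← Real.rpow_mul hz₂.le]
  have he : 1 / (p - 1) * p = 1 + 1 / (p - 1) := by field_simp; ring
  rw [he, Real.rpow_add hz₂, Real.rpow_one]

lemma f_nonneg_lt {p z₂ z₃ x : ℝ} (hp1 : 1 < p) (hz₂ : z₂ ∈ Set.Ioo (0:ℝ) 1) (hz₃ : 0 < z₃)
    (hx0 : 0 ≤ x) (hx : x ≤ z₃ * z₂ ^ (1 / (p - 1)) / (1 - z₂ ^ (1 / (p - 1)))) :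
    0 ≤ z₂ * (x + z₃) ^ p - x ^ p := by
  set s := z₂ ^ (1 / (p - 1)) with hs
  have hs0 : 0 < s := Real.rpow_pos_of_pos hz₂.1 _
  have hs1 : s < 1 := s_lt_one hp1 hz₂
  have hxs := x_le_s hp1 hz₂ hz₃ hx
  have key : x ^ p ≤ z₂ * s * (x + z₃) ^ p := by
    calc x ^ p ≤ (s * (x + z₃)) ^ p := Real.rpow_le_rpow hx0 hxs (by linarith)
    _ = s ^ p * (x + z₃) ^ p := Real.mul_rpow hs0.le (by linarith)
    _ = z₂ * s * (x + z₃) ^ p := by rw [hs, s_pow_p hp1 hz₂.1]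
  have hA : 0 ≤ (x + z₃) ^ p := Real.rpow_nonneg (by linarith) _
  have h2 : 0 ≤ z₂ * (x + z₃) ^ p * (1 - s) :=
    mul_nonneg (mul_nonneg hz₂.1.le hA) (by linarith)
  nlinarith [h2, key]

theorem stmt17 (n : ℕ) (σ : ℝ) (hσ : σ ∈ Set.Ioo (0:ℝ) 1) (hn : 2 * σ < (n:ℝ))
    (p : ℝ) (hp : p = ((n:ℝ) + 2 * σ) / ((n:ℝ) - 2 * σ))
    (Z M : ℝ → ℝ → ℝ)
    (hZ : ∀ z₂ z₃, Z z₂ z₃ = z₃ * z₂ ^ (1 / (p - 1)) / (1 - z₂ ^ (1 / (p - 1))))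
    (hM : ∀ z₂ z₃, M z₂ z₃
      = z₂ * z₃ ^ p / (1 - z₂ ^ (1 / (p - 1))) ^ (4 * σ / ((n:ℝ) - 2 * σ)))
    (F : ℝ → ℝ → ℝ → ℝ)
    (hF : ∀ z₁ z₂ z₃, 0 ≤ z₁ → 0 < z₂ → 0 < z₃ →
      (1 ≤ z₂ → F z₁ z₂ z₃ = z₂ * (z₁ + z₃) ^ p - z₁ ^ p) ∧
      (z₂ < 1 → z₁ ≤ Z z₂ z₃ → F z₁ z₂ z₃ = z₂ * (z₁ + z₃) ^ p - z₁ ^ p) ∧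
      (z₂ < 1 → Z z₂ z₃ < z₁ → F z₁ z₂ z₃ = M z₂ z₃)) :
    (∀ z₁ z₂ z₃, 0 ≤ z₁ → 0 < z₂ → 0 < z₃ → 0 ≤ F z₁ z₂ z₃) ∧
    (∀ z₂ z₃, 0 < z₂ → 0 < z₃ →
      MonotoneOn (fun z₁ => F z₁ z₂ z₃) (Set.Ici 0)) ∧
    (∀ z₁ z₃, 0 ≤ z₁ → 0 < z₃ →
      MonotoneOn (fun z₂ => F z₁ z₂ z₃) (Set.Ioi 0)) ∧
    (∀ z₁ z₂, 0 ≤ z₁ → 0 < z₂ →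
      MonotoneOn (fun z₃ => F z₁ z₂ z₃) (Set.Ioi 0)) := by
  obtain ⟨hσ0, hσ1⟩ := hσ
  have hns : (0:ℝ) < (n:ℝ) - 2 * σ := by linarith
  have hp1 : 1 < p := by rw [hp]; exact (one_lt_div hns).mpr (by linarith)
  have hq0 : 0 < 1 / (p - 1) := div_pos one_pos (by linarith)
  have hpm : 4 * σ / ((n:ℝ) - 2 * σ) = p - 1 := by
    rw [hp, eq_sub_iff_add_eq, div_add_one hns.ne']; congr 1; ring
  have hM' : ∀ z₂ z₃ : ℝ, M z₂ z₃
      = z₂ * z₃ ^ p / (1 - z₂ ^ (1 / (p - 1))) ^ (p - 1) := by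
    intro z₂ z₃; rw [hM, hpm]
  have hkey : ∀ z₂ z₃ : ℝ, z₂ ∈ Set.Ioo (0:ℝ) 1 → 0 < z₃ →
      z₂ * (Z z₂ z₃ + z₃) ^ p - (Z z₂ z₃) ^ p = M z₂ z₃ := by
    intro z₂ z₃ h h3; rw [hZ, hM']; exact key_id hp1 h h3
  have hZnn : ∀ z₂ z₃ : ℝ, z₂ ∈ Set.Ioo (0:ℝ) 1 → 0 < z₃ → 0 ≤ Z z₂ z₃ := by
    intro z₂ z₃ h h3
    rw [hZ]
    have hs1 := s_lt_one hp1 h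
    exact div_nonneg (mul_nonneg h3.le (Real.rpow_nonneg h.1.le _)) (by linarith)
  have hMnn : ∀ z₂ z₃ : ℝ, z₂ ∈ Set.Ioo (0:ℝ) 1 → 0 < z₃ → 0 ≤ M z₂ z₃ := by
    intro z₂ z₃ h h3
    rw [hM']
    have hs1 := s_lt_one hp1 h
    exact div_nonneg (mul_nonneg h.1.le (Real.rpow_nonneg h3.le _))
      (Real.rpow_nonneg (by linarith) _)
  refine ⟨?_, ?_, ?_, ?_⟩
  · -- nonnegativity
    intro z₁ z₂ z₃ h1 h2 h3
    obtain ⟨hA, hB, hC⟩ := hF z₁ z₂ z₃ h1 h2 h3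
    rcases le_or_gt 1 z₂ with h | h
    · rw [hA h]
      have k1 : z₁ ^ p ≤ (z₁ + z₃) ^ p := Real.rpow_le_rpow h1 (by linarith) (by linarith)
      have k2 : (z₁ + z₃) ^ p ≤ z₂ * (z₁ + z₃) ^ p :=
        le_mul_of_one_le_left (Real.rpow_nonneg (by linarith) _) h
      linarith
    · rcases le_or_gt z₁ (Z z₂ z₃) with hle | hgt
      · rw [hB h hle]
        exact f_nonneg_lt hp1 ⟨h2, h⟩ h3 h1 (hle.trans_eq (hZ z₂ z₃))
      · rw [hC h hgt]; exact hMnn z₂ z₃ ⟨h2, h⟩ h3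
  · -- monotone in z₁
    intro z₂ z₃ h2 h3 x hx y hy hxy
    simp only [Set.mem_Ici] at hx hy
    show F x z₂ z₃ ≤ F y z₂ z₃
    obtain ⟨hAx, hBx, hCx⟩ := hF x z₂ z₃ hx h2 h3
    obtain ⟨hAy, hBy, hCy⟩ := hF y z₂ z₃ hy h2 h3
    rcases le_or_gt 1 z₂ with h | h
    · rw [hAx h, hAy h]
      exact aux_mono hp1 z₂ z₃ hxy fun t ht => cond_ge1 hp1 h h3.le (hx.trans ht.1)
    · rcases le_or_gt y (Z z₂ z₃) with hyZ | hyZ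
      · rw [hBx h (hxy.trans hyZ), hBy h hyZ]
        exact aux_mono hp1 z₂ z₃ hxy fun t ht =>
          cond_lt hp1 ⟨h2, h⟩ h3 (hx.trans ht.1) ((ht.2.trans hyZ).trans_eq (hZ z₂ z₃))
      · rcases le_or_gt x (Z z₂ z₃) with hxZ | hxZ
        · rw [hBx h hxZ, hCy h hyZ, ← hkey z₂ z₃ ⟨h2, h⟩ h3]
          exact aux_mono hp1 z₂ z₃ hxZ fun t ht =>
            cond_lt hp1 ⟨h2, h⟩ h3 (hx.trans ht.1) (ht.2.trans_eq (hZ z₂ z₃))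
        · rw [hCx h hxZ, hCy h hyZ]
  · -- monotone in z₂
    intro z₁ z₃ h1 h3 a ha b hb hab
    simp only [Set.mem_Ioi] at ha hb
    show F z₁ a z₃ ≤ F z₁ b z₃
    obtain ⟨hAa, hBa, hCa⟩ := hF z₁ a z₃ h1 ha h3
    obtain ⟨hAb, hBb, hCb⟩ := hF z₁ b z₃ h1 hb h3
    have hz13 : (0:ℝ) ≤ z₁ + z₃ := by linarith
    rcases le_or_gt 1 a with h1a | h1a
    · rw [hAa h1a, hAb (h1a.trans hab)]
      have := mul_le_mul_of_nonneg_right hab (Real.rpow_nonneg hz13 p)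
      linarith
    · rcases le_or_gt 1 b with h1b | h1b
      · rcases le_or_gt z₁ (Z a z₃) with hzZ | hzZ
        · rw [hBa h1a hzZ, hAb h1b]
          have := mul_le_mul_of_nonneg_right hab (Real.rpow_nonneg hz13 p)
          linarith
        · rw [hCa h1a hzZ, hAb h1b, ← hkey a z₃ ⟨ha, h1a⟩ h3]
          have hZnn' := hZnn a z₃ ⟨ha, h1a⟩ h3
          calc a * (Z a z₃ + z₃) ^ p - (Z a z₃) ^ p
              ≤ b * (Z a z₃ + z₃) ^ p - (Z a z₃) ^ p := by
                have := mul_le_mul_of_nonneg_right hab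
                  (Real.rpow_nonneg (show (0:ℝ) ≤ Z a z₃ + z₃ by linarith) p)
                linarith
            _ ≤ b * (z₁ + z₃) ^ p - z₁ ^ p :=
                aux_mono hp1 b z₃ hzZ.le fun t ht =>
                  cond_ge1 hp1 h1b h3.le (hZnn'.trans ht.1)
      · -- both < 1
        have hsab : a ^ (1 / (p - 1)) ≤ b ^ (1 / (p - 1)) :=
          Real.rpow_le_rpow ha.le hab hq0.le
        have hsb1 : b ^ (1 / (p - 1)) < 1 := s_lt_one hp1 ⟨hb, h1b⟩
        have h1sb : (0:ℝ) < 1 - b ^ (1 / (p - 1)) := by linarith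
        have hZab : Z a z₃ ≤ Z b z₃ := by
          rw [hZ, hZ]
          exact div_le_div₀ (mul_nonneg h3.le (Real.rpow_nonneg hb.le _))
            (mul_le_mul_of_nonneg_left hsab h3.le) h1sb (by linarith)
        rcases le_or_gt z₁ (Z a z₃) with hzZa | hzZa
        · rw [hBa h1a hzZa, hBb h1b (hzZa.trans hZab)]
          have := mul_le_mul_of_nonneg_right hab (Real.rpow_nonneg hz13 p)
          linarith
        · rcases le_or_gt z₁ (Z b z₃) with hzZb | hzZb
          · rw [hCa h1a hzZa, hBb h1b hzZb, ← hkey a z₃ ⟨ha, h1a⟩ h3]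
            have hZnn' := hZnn a z₃ ⟨ha, h1a⟩ h3
            calc a * (Z a z₃ + z₃) ^ p - (Z a z₃) ^ p
                ≤ b * (Z a z₃ + z₃) ^ p - (Z a z₃) ^ p := by
                  have := mul_le_mul_of_nonneg_right hab
                    (Real.rpow_nonneg (show (0:ℝ) ≤ Z a z₃ + z₃ by linarith) p)
                  linarith
              _ ≤ b * (z₁ + z₃) ^ p - z₁ ^ p :=
                  aux_mono hp1 b z₃ hzZa.le fun t ht =>
                    cond_lt hp1 ⟨hb, h1b⟩ h3 (hZnn'.trans ht.1)
                      ((ht.2.trans hzZb).trans_eq (hZ b z₃))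
          · rw [hCa h1a hzZa, hCb h1b hzZb, hM', hM']
            exact div_le_div₀ (mul_nonneg hb.le (Real.rpow_nonneg h3.le _))
              (mul_le_mul_of_nonneg_right hab (Real.rpow_nonneg h3.le _))
              (Real.rpow_pos_of_pos h1sb _)
              (Real.rpow_le_rpow h1sb.le (by linarith) (by linarith))
  · -- monotone in z₃
    intro z₁ z₂ h1 h2 a ha b hb hab
    simp only [Set.mem_Ioi] at ha hb
    show F z₁ z₂ a ≤ F z₁ z₂ b
    obtain ⟨hAa, hBa, hCa⟩ := hF z₁ z₂ a h1 h2 ha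
    obtain ⟨hAb, hBb, hCb⟩ := hF z₁ z₂ b h1 h2 hb
    have hrb : (z₁ + a) ^ p ≤ (z₁ + b) ^ p :=
      Real.rpow_le_rpow (by linarith) (by linarith) (by linarith)
    rcases le_or_gt 1 z₂ with h1z | h1z
    · rw [hAa h1z, hAb h1z]
      have := mul_le_mul_of_nonneg_left hrb h2.le
      linarith
    · have hs1 := s_lt_one hp1 ⟨h2, h1z⟩
      have hZab : Z z₂ a ≤ Z z₂ b := by
        rw [hZ, hZ]
        exact div_le_div₀ (mul_nonneg hb.le (Real.rpow_nonneg h2.le _))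
          (mul_le_mul_of_nonneg_right hab (Real.rpow_nonneg h2.le _))
          (by linarith) le_rfl
      rcases le_or_gt z₁ (Z z₂ a) with hza | hza
      · rw [hBa h1z hza, hBb h1z (hza.trans hZab)]
        have := mul_le_mul_of_nonneg_left hrb h2.le
        linarith
      · rcases le_or_gt z₁ (Z z₂ b) with hzb | hzb
        · rw [hCa h1z hza, hBb h1z hzb, ← hkey z₂ a ⟨h2, h1z⟩ ha]
          have hZnn' := hZnn z₂ a ⟨h2, h1z⟩ ha
          calc z₂ * (Z z₂ a + a) ^ p - (Z z₂ a) ^ p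
              ≤ z₂ * (Z z₂ a + b) ^ p - (Z z₂ a) ^ p := by
                have hr : (Z z₂ a + a) ^ p ≤ (Z z₂ a + b) ^ p :=
                  Real.rpow_le_rpow (by linarith) (by linarith) (by linarith)
                have := mul_le_mul_of_nonneg_left hr h2.le
                linarith
            _ ≤ z₂ * (z₁ + b) ^ p - z₁ ^ p :=
                aux_mono hp1 z₂ b hza.le fun t ht =>
                  cond_lt hp1 ⟨h2, h1z⟩ hb (hZnn'.trans ht.1)
                    ((ht.2.trans hzb).trans_eq (hZ z₂ b))
        · rw [hCa h1z hza, hCb h1z hzb, hM', hM']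
          have hra : a ^ p ≤ b ^ p := Real.rpow_le_rpow ha.le hab (by linarith)
          exact div_le_div₀ (mul_nonneg h2.le (Real.rpow_nonneg hb.le _))
            (mul_le_mul_of_nonneg_left hra h2.le)
            (Real.rpow_pos_of_pos (by linarith) _) le_rfl
end
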